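/- Let I be a finite (or countable, with convergent sums) index set and let A_i ∈ ℂ^{n×m} and B_i ∈ ℂ^{n'×m'} for each i ∈ I. Then ‖∑_{i∈I} A_i ⊗ B_i*‖ ≤ √( ‖∑_{i∈I} A_i A_i†‖ · ‖∑_{i∈I} B_i† B_i‖ ), where ⊗ is the Kronecker product, B* the entrywise complex conjugate, and ‖·‖ the operator (spectral) norm. -/
import Mathlib

open scoped Kronecker Matrix

namespace Stmt14

/-- Operator (spectral) norm of a complex matrix. -/
noncomputable def opNorm {m n : Type*} [Fintype m] [Fintype n] [DecidableEq n]
    (A : Matrix m n ℂ) : ℝ :=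
  ‖LinearMap.toContinuousLinearMap (Matrix.toEuclideanLin A)‖

/-- Entrywise complex conjugate of a matrix. -/
def conjM {m n : Type*} (A : Matrix m n ℂ) : Matrix m n ℂ := A.map (starRingEnd ℂ)

open scoped Matrix.Norms.L2Operator

lemma opNorm_eq {m n : Type*} [Fintype m] [Fintype n] [DecidableEq n] (A : Matrix m n ℂ) :
    opNorm A = ‖A‖ := rfl

/-- Slice of a Euclidean vector on a product index type (second index fixed). -/
noncomputable def sl {k p : Type*} (y : EuclideanSpace ℂ (k × p)) (s : p) :
    EuclideanSpace ℂ k :=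
  (WithLp.equiv 2 (k → ℂ)).symm fun i => y (i, s)

@[simp] lemma sl_apply {k p : Type*} (y : EuclideanSpace ℂ (k × p)) (s : p) (i : k) :
    sl y s i = y (i, s) := rfl

/-- Slice of a Euclidean vector on a product index type (first index fixed). -/
noncomputable def sl' {k p : Type*} (y : EuclideanSpace ℂ (p × k)) (s : p) :
    EuclideanSpace ℂ k :=
  (WithLp.equiv 2 (k → ℂ)).symm fun i => y (s, i)

@[simp] lemma sl'_apply {k p : Type*} (y : EuclideanSpace ℂ (p × k)) (s : p) (i : k) :
    sl' y s i = y (s, i) := rfl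

lemma norm_le_bound {m n : Type*} [Fintype m] [Fintype n] [DecidableEq n]
    (A : Matrix m n ℂ) (c : ℝ) (hc : 0 ≤ c)
    (h : ∀ x : EuclideanSpace ℂ n, ‖(Matrix.toEuclideanLin A x : EuclideanSpace ℂ m)‖ ≤ c * ‖x‖) :
    ‖A‖ ≤ c := by
  rw [Matrix.l2_opNorm_def]
  exact ContinuousLinearMap.opNorm_le_bound _ hc h

lemma le_norm_mulVec {m n : Type*} [Fintype m] [Fintype n] [DecidableEq n]
    (A : Matrix m n ℂ) (x : EuclideanSpace ℂ n) :
    ‖(Matrix.toEuclideanLin A x : EuclideanSpace ℂ m)‖ ≤ ‖A‖ * ‖x‖ :=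
  Matrix.l2_opNorm_mulVec A x

lemma norm_le_of_slices {k p l : Type*} [Fintype k] [Fintype p] [Fintype l]
    (y : EuclideanSpace ℂ (k × p)) (x : EuclideanSpace ℂ (l × p)) (c : ℝ) (hc : 0 ≤ c)
    (h : ∀ s : p, ‖sl y s‖ ≤ c * ‖sl x s‖) :
    ‖y‖ ≤ c * ‖x‖ := by
  have key : ‖y‖ ^ 2 ≤ (c * ‖x‖) ^ 2 := by
    have hy : ‖y‖ ^ 2 = ∑ s : p, ∑ i : k, ‖y (i, s)‖ ^ 2 := by
      rw [EuclideanSpace.norm_eq, Real.sq_sqrt (by positivity), Fintype.sum_prod_type,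
        Finset.sum_comm]
    have hx : ‖x‖ ^ 2 = ∑ s : p, ∑ j : l, ‖x (j, s)‖ ^ 2 := by
      rw [EuclideanSpace.norm_eq, Real.sq_sqrt (by positivity), Fintype.sum_prod_type,
        Finset.sum_comm]
    rw [hy, mul_pow, hx, Finset.mul_sum]
    refine Finset.sum_le_sum fun s _ => ?_
    have h1 : ∑ i : k, ‖y (i, s)‖ ^ 2 = ‖sl y s‖ ^ 2 := by
      rw [EuclideanSpace.norm_eq (sl y s), Real.sq_sqrt (by positivity)]; simp
    have h2 : ∑ j : l, ‖x (j, s)‖ ^ 2 = ‖sl x s‖ ^ 2 := by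
      rw [EuclideanSpace.norm_eq (sl x s), Real.sq_sqrt (by positivity)]; simp
    rw [h1, h2, ← mul_pow]
    exact pow_le_pow_left₀ (norm_nonneg _) (h s) 2
  calc ‖y‖ = Real.sqrt (‖y‖ ^ 2) := (Real.sqrt_sq (norm_nonneg _)).symm
    _ ≤ Real.sqrt ((c * ‖x‖) ^ 2) := Real.sqrt_le_sqrt key
    _ = c * ‖x‖ := Real.sqrt_sq (by positivity)

lemma norm_le_of_slices' {k p l : Type*} [Fintype k] [Fintype p] [Fintype l]
    (y : EuclideanSpace ℂ (p × k)) (x : EuclideanSpace ℂ (p × l)) (c : ℝ) (hc : 0 ≤ c)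
    (h : ∀ s : p, ‖sl' y s‖ ≤ c * ‖sl' x s‖) :
    ‖y‖ ≤ c * ‖x‖ := by
  have key : ‖y‖ ^ 2 ≤ (c * ‖x‖) ^ 2 := by
    have hy : ‖y‖ ^ 2 = ∑ s : p, ∑ i : k, ‖y (s, i)‖ ^ 2 := by
      rw [EuclideanSpace.norm_eq, Real.sq_sqrt (by positivity), Fintype.sum_prod_type]
    have hx : ‖x‖ ^ 2 = ∑ s : p, ∑ j : l, ‖x (s, j)‖ ^ 2 := by
      rw [EuclideanSpace.norm_eq, Real.sq_sqrt (by positivity), Fintype.sum_prod_type]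
    rw [hy, mul_pow, hx, Finset.mul_sum]
    refine Finset.sum_le_sum fun s _ => ?_
    have h1 : ∑ i : k, ‖y (s, i)‖ ^ 2 = ‖sl' y s‖ ^ 2 := by
      rw [EuclideanSpace.norm_eq (sl' y s), Real.sq_sqrt (by positivity)]; simp
    have h2 : ∑ j : l, ‖x (s, j)‖ ^ 2 = ‖sl' x s‖ ^ 2 := by
      rw [EuclideanSpace.norm_eq (sl' x s), Real.sq_sqrt (by positivity)]; simp
    rw [h1, h2, ← mul_pow]
    exact pow_le_pow_left₀ (norm_nonneg _) (h s) 2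
  calc ‖y‖ = Real.sqrt (‖y‖ ^ 2) := (Real.sqrt_sq (norm_nonneg _)).symm
    _ ≤ Real.sqrt ((c * ‖x‖) ^ 2) := Real.sqrt_le_sqrt key
    _ = c * ‖x‖ := Real.sqrt_sq (by positivity)

lemma kron_one_slice {k l p : Type*} [Fintype l] [Fintype p] [DecidableEq l] [DecidableEq p]
    (C : Matrix k l ℂ) (x : EuclideanSpace ℂ (l × p)) (s : p) :
    sl (Matrix.toEuclideanLin (C ⊗ₖ (1 : Matrix p p ℂ)) x : EuclideanSpace ℂ (k × p)) s
      = Matrix.toEuclideanLin C (sl x s) := by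
  ext i
  simp only [sl_apply, Matrix.toEuclideanLin_apply]
  show ((C ⊗ₖ (1 : Matrix p p ℂ)) *ᵥ fun q => x q) (i, s) = (C *ᵥ fun j => x (j, s)) i
  simp [Matrix.mulVec, dotProduct, Fintype.sum_prod_type, Matrix.one_apply,
    mul_ite, mul_zero, ite_mul, zero_mul]

lemma one_kron_slice {k l p : Type*} [Fintype l] [Fintype p] [DecidableEq l] [DecidableEq p]
    (D : Matrix k l ℂ) (x : EuclideanSpace ℂ (p × l)) (s : p) :
    sl' (Matrix.toEuclideanLin ((1 : Matrix p p ℂ) ⊗ₖ D) x : EuclideanSpace ℂ (p × k)) s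
      = Matrix.toEuclideanLin D (sl' x s) := by
  ext i
  simp only [sl'_apply, Matrix.toEuclideanLin_apply]
  show (((1 : Matrix p p ℂ) ⊗ₖ D) *ᵥ fun q => x q) (s, i) = (D *ᵥ fun j => x (s, j)) i
  simp [Matrix.mulVec, dotProduct, Fintype.sum_prod_type, Matrix.one_apply,
    mul_ite, mul_zero, ite_mul, zero_mul]

lemma norm_kron_one_le {k l p : Type*} [Fintype k] [Fintype l] [Fintype p]
    [DecidableEq l] [DecidableEq p] (C : Matrix k l ℂ) :
    ‖C ⊗ₖ (1 : Matrix p p ℂ)‖ ≤ ‖C‖ := by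
  apply norm_le_bound _ _ (norm_nonneg _)
  intro x
  apply norm_le_of_slices _ x _ (norm_nonneg _)
  intro s
  rw [kron_one_slice]
  exact le_norm_mulVec C (sl x s)

lemma norm_one_kron_le {k l p : Type*} [Fintype k] [Fintype l] [Fintype p]
    [DecidableEq l] [DecidableEq p] (D : Matrix k l ℂ) :
    ‖(1 : Matrix p p ℂ) ⊗ₖ D‖ ≤ ‖D‖ := by
  apply norm_le_bound _ _ (norm_nonneg _)
  intro x
  apply norm_le_of_slices' _ x _ (norm_nonneg _)
  intro s
  rw [one_kron_slice]
  exact le_norm_mulVec D (sl' x s)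

lemma norm_conjM_le {k l : Type*} [Fintype k] [Fintype l] [DecidableEq l] (M : Matrix k l ℂ) :
    ‖conjM M‖ ≤ ‖M‖ := by
  apply norm_le_bound _ _ (norm_nonneg _)
  intro x
  set x' : EuclideanSpace ℂ l := (WithLp.equiv 2 (l → ℂ)).symm fun j => starRingEnd ℂ (x j)
    with hx'def
  have hx' : ‖x'‖ = ‖x‖ := by
    rw [EuclideanSpace.norm_eq, EuclideanSpace.norm_eq]
    simp [hx'def]
  have hnorm : ‖(Matrix.toEuclideanLin (conjM M) x : EuclideanSpace ℂ k)‖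
      = ‖(Matrix.toEuclideanLin M x' : EuclideanSpace ℂ k)‖ := by
    have happ : ∀ i, (Matrix.toEuclideanLin (conjM M) x : EuclideanSpace ℂ k) i
        = starRingEnd ℂ ((Matrix.toEuclideanLin M x' : EuclideanSpace ℂ k) i) := by
      intro i
      simp only [Matrix.toEuclideanLin_apply]
      show (conjM M *ᵥ fun j => x j) i = starRingEnd ℂ ((M *ᵥ fun j => x' j) i)
      simp [conjM, Matrix.mulVec, dotProduct, map_sum, hx'def]
    rw [EuclideanSpace.norm_eq, EuclideanSpace.norm_eq]
    congr 1
    exact Finset.sum_congr rfl fun i _ => by rw [happ i]; simp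
  rw [hnorm, ← hx']
  exact le_norm_mulVec M x'

lemma block_mul {ι μ κ ν : Type*} [Fintype ι] [Fintype κ]
    (P : ι → Matrix μ κ ℂ) (Q : ι → Matrix κ ν ℂ) :
    (Matrix.of fun (a : μ) (b : ι × κ) => P b.1 a b.2) *
      (Matrix.of fun (b : ι × κ) (c : ν) => Q b.1 b.2 c) = ∑ i, P i * Q i := by
  ext a c
  rw [Matrix.mul_apply, Fintype.sum_prod_type, Matrix.sum_apply]
  simp only [Matrix.of_apply]
  exact Finset.sum_congr rfl fun i _ => (Matrix.mul_apply).symm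

lemma kron_conjT {a b c d : Type*} (A : Matrix a b ℂ) (B : Matrix c d ℂ) :
    (A ⊗ₖ B)ᴴ = Aᴴ ⊗ₖ Bᴴ := by
  ext ⟨i, j⟩ ⟨k, l⟩
  simp [Matrix.conjTranspose_apply, mul_comm]

lemma sum_kron {ι a b c d : Type*} [Fintype ι] (f : ι → Matrix a b ℂ) (C : Matrix c d ℂ) :
    (∑ i, f i) ⊗ₖ C = ∑ i, f i ⊗ₖ C := by
  ext ⟨i, j⟩ ⟨k, l⟩
  simp [Matrix.sum_apply, Finset.sum_mul]

lemma kron_sum {ι a b c d : Type*} [Fintype ι] (C : Matrix c d ℂ) (f : ι → Matrix a b ℂ) :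
    C ⊗ₖ (∑ i, f i) = ∑ i, C ⊗ₖ f i := by
  ext ⟨i, j⟩ ⟨k, l⟩
  simp [Matrix.sum_apply, Finset.mul_sum]

lemma conjM_sum {ι a b : Type*} [Fintype ι] (f : ι → Matrix a b ℂ) :
    conjM (∑ i, f i) = ∑ i, conjM (f i) := by
  ext i j
  simp [conjM, Matrix.sum_apply, map_sum]

lemma conjM_conjT_mul {a b : Type*} [Fintype a] (B : Matrix a b ℂ) :
    (conjM B)ᴴ * conjM B = conjM (Bᴴ * B) := by
  ext j k
  simp [conjM, Matrix.mul_apply, Matrix.conjTranspose_apply, map_sum, mul_comm]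

/-- Norm bound on sums of Kronecker products:
`‖∑ᵢ Aᵢ ⊗ Bᵢ*‖ ≤ √(‖∑ᵢ Aᵢ Aᵢ†‖·‖∑ᵢ Bᵢ† Bᵢ‖)`. -/
theorem stmt14 (n m n' m' : ℕ) (ι : Type) [Fintype ι]
    (A : ι → Matrix (Fin n) (Fin m) ℂ) (B : ι → Matrix (Fin n') (Fin m') ℂ) :
    opNorm (∑ i, A i ⊗ₖ conjM (B i)) ≤
      Real.sqrt (opNorm (∑ i, A i * (A i)ᴴ) * opNorm (∑ i, (B i)ᴴ * B i)) := by
  classical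
  simp only [opNorm_eq]
  set P : ι → Matrix (Fin n × Fin n') (Fin m × Fin n') ℂ :=
    fun i => A i ⊗ₖ (1 : Matrix (Fin n') (Fin n') ℂ) with hP
  set Q : ι → Matrix (Fin m × Fin n') (Fin m × Fin m') ℂ :=
    fun i => (1 : Matrix (Fin m) (Fin m) ℂ) ⊗ₖ conjM (B i) with hQ
  set X : Matrix (Fin n × Fin n') (ι × (Fin m × Fin n')) ℂ :=
    Matrix.of fun a b => P b.1 a b.2 with hXdef
  set Y : Matrix (ι × (Fin m × Fin n')) (Fin m × Fin m') ℂ :=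
    Matrix.of fun b c => Q b.1 b.2 c with hYdef
  have hXY : X * Y = ∑ i, A i ⊗ₖ conjM (B i) := by
    rw [hXdef, hYdef, block_mul]
    refine Finset.sum_congr rfl fun i _ => ?_
    rw [hP, hQ]
    dsimp only
    rw [← Matrix.mul_kronecker_mul, Matrix.mul_one, Matrix.one_mul]
  have hXXH : X * Xᴴ = (∑ i, A i * (A i)ᴴ) ⊗ₖ (1 : Matrix (Fin n') (Fin n') ℂ) := by
    have h1 : Xᴴ = Matrix.of fun (b : ι × (Fin m × Fin n')) (c : Fin n × Fin n') =>
        (P b.1)ᴴ b.2 c := by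
      ext b c
      simp [hXdef, Matrix.conjTranspose_apply]
    rw [h1, hXdef, block_mul P (fun i => (P i)ᴴ), sum_kron]
    refine Finset.sum_congr rfl fun i _ => ?_
    rw [hP]
    dsimp only
    rw [kron_conjT, Matrix.conjTranspose_one, ← Matrix.mul_kronecker_mul, Matrix.one_mul]
  have hYHY : Yᴴ * Y = (1 : Matrix (Fin m) (Fin m) ℂ) ⊗ₖ conjM (∑ i, (B i)ᴴ * B i) := by
    have h1 : Yᴴ = Matrix.of fun (a : Fin m × Fin m') (b : ι × (Fin m × Fin n')) =>
        (Q b.1)ᴴ a b.2 := by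
      ext a b
      simp [hYdef, Matrix.conjTranspose_apply]
    rw [h1, hYdef, block_mul (fun i => (Q i)ᴴ) Q, conjM_sum, kron_sum]
    refine Finset.sum_congr rfl fun i _ => ?_
    rw [hQ]
    dsimp only
    rw [kron_conjT, Matrix.conjTranspose_one, ← Matrix.mul_kronecker_mul, Matrix.one_mul,
      conjM_conjT_mul]
  have ha : (0:ℝ) ≤ ‖∑ i, A i * (A i)ᴴ‖ := norm_nonneg _
  have hb : (0:ℝ) ≤ ‖∑ i, (B i)ᴴ * B i‖ := norm_nonneg _
  have hX2 : ‖X‖ * ‖X‖ ≤ ‖∑ i, A i * (A i)ᴴ‖ := by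
    have h := Matrix.l2_opNorm_conjTranspose_mul_self Xᴴ
    rw [Matrix.conjTranspose_conjTranspose, Matrix.l2_opNorm_conjTranspose] at h
    rw [← h, hXXH]
    exact norm_kron_one_le _
  have hY2 : ‖Y‖ * ‖Y‖ ≤ ‖∑ i, (B i)ᴴ * B i‖ := by
    have h := Matrix.l2_opNorm_conjTranspose_mul_self Y
    rw [← h, hYHY]
    exact le_trans (norm_one_kron_le _) (norm_conjM_le _)
  have hXle : ‖X‖ ≤ Real.sqrt ‖∑ i, A i * (A i)ᴴ‖ :=
    (Real.le_sqrt (norm_nonneg _) ha).mpr (by rw [sq]; exact hX2)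
  have hYle : ‖Y‖ ≤ Real.sqrt ‖∑ i, (B i)ᴴ * B i‖ :=
    (Real.le_sqrt (norm_nonneg _) hb).mpr (by rw [sq]; exact hY2)
  calc ‖∑ i, A i ⊗ₖ conjM (B i)‖ = ‖X * Y‖ := by rw [hXY]
    _ ≤ ‖X‖ * ‖Y‖ := Matrix.l2_opNorm_mul X Y
    _ ≤ Real.sqrt ‖∑ i, A i * (A i)ᴴ‖ * Real.sqrt ‖∑ i, (B i)ᴴ * B i‖ :=
        mul_le_mul hXle hYle (norm_nonneg _) (Real.sqrt_nonneg _)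
    _ = Real.sqrt (‖∑ i, A i * (A i)ᴴ‖ * ‖∑ i, (B i)ᴴ * B i‖) := (Real.sqrt_mul ha _).symm

end Stmt14
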